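/- In the category of abelian groups, the inclusion ℤ ⟶ ℚ (the canonical ring-theoretic coercion, viewed as a morphism of abelian groups) is a pullback stable essential monomorphism which is not an isomorphism. (Hence the category of abelian groups is balanced but does not satisfy the condition that every pullback stable essential monomorphism is an isomorphism.) -/

import Mathlib

/-!
Pulling `ℤ ⟶ ℚ` back along `u : X ⟶ ℚ` gives the inclusion of `u⁻¹ ℤ` into `X`. This subgroup is
essential: for `x ≠ 0` with `u x = p / q`, either `q • x ≠ 0` lies in it, or `q • x = 0`, in which
case `u x = 0` since `ℚ` is torsion-free, and `x` itself lies in it. The argument only uses that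
`ℚ` is torsion-free and `ℚ / ℤ` is torsion.
-/

open CategoryTheory Limits

/-- A morphism `m` is an essential monomorphism if it is a monomorphism and every
morphism `f` such that `m ≫ f` is a monomorphism is itself a monomorphism. -/
def IsEssentialMono {C : Type*} [CategoryTheory.Category C] {S A : C} (m : S ⟶ A) : Prop :=
  CategoryTheory.Mono m ∧
    ∀ ⦃B : C⦄ (f : A ⟶ B), CategoryTheory.Mono (m ≫ f) → CategoryTheory.Mono f

/-- A morphism `m : S ⟶ A` is a pullback stable essential monomorphism if for every
morphism `u : X ⟶ A` the pullback projection `S ×_A X ⟶ X` of `m` along `u` is an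
essential monomorphism. -/
def IsStableEssentialMono {C : Type*} [CategoryTheory.Category C]
    [CategoryTheory.Limits.HasPullbacks C] {S A : C} (m : S ⟶ A) : Prop :=
  ∀ ⦃X : C⦄ (u : X ⟶ A), IsEssentialMono (CategoryTheory.Limits.pullback.snd m u)

universe u

namespace AddCommGrpCat

theorem isEssentialMono_of_forall_exists_zsmul_mem_range {P X : AddCommGrpCat.{u}} (i : P ⟶ X)
    [Mono i] (h : ∀ x : X, x ≠ 0 → ∃ n : ℤ, n • x ≠ 0 ∧ n • x ∈ Set.range i) :
    IsEssentialMono i := by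
  refine ⟨inferInstance, fun B f hif => ?_⟩
  rw [mono_iff_injective] at hif ⊢
  refine (injective_iff_map_eq_zero _).2 fun x hfx => ?_
  by_contra hx
  obtain ⟨n, hnx, p, hp⟩ := h x hx
  have hp0 : p = 0 := (injective_iff_map_eq_zero _).1 hif p <| by
    change f (i p) = 0
    rw [hp, map_zsmul, hfx, smul_zero]
  exact hnx (by rw [← hp, hp0, map_zero])

theorem mem_range_pullback_snd {S A X : AddCommGrpCat.{u}} (m : S ⟶ A) (u : X ⟶ A) {y : X}
    (hy : u y ∈ Set.range m) : y ∈ Set.range (pullback.snd m u) := by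
  obtain ⟨s, hs⟩ := hy
  exact ⟨Concrete.pullbackMk m u s y hs, Concrete.pullbackMk_snd m u s y hs⟩

theorem isStableEssentialMono_of_forall_exists_zsmul_mem_range {S A : AddCommGrpCat.{u}}
    (m : S ⟶ A) [Mono m] [IsAddTorsionFree A]
    (h : ∀ a : A, ∃ n : ℤ, n ≠ 0 ∧ n • a ∈ Set.range m) : IsStableEssentialMono m := by
  intro X u
  refine isEssentialMono_of_forall_exists_zsmul_mem_range _ fun x hx => ?_
  obtain ⟨n, hn, hnu⟩ := h (u x)
  by_cases hnx : n • x = 0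
  · have hux : u x = 0 := by
      rw [← IsAddTorsionFree.zsmul_eq_zero_iff_right hn, ← map_zsmul, hnx, map_zero]
    refine ⟨1, by rwa [one_zsmul], mem_range_pullback_snd m u ⟨0, ?_⟩⟩
    rw [one_zsmul, hux, map_zero]
  · refine ⟨n, hnx, mem_range_pullback_snd m u ?_⟩
    rwa [map_zsmul]

end AddCommGrpCat

theorem Rat.den_zsmul_eq_num (q : ℚ) : (q.den : ℤ) • q = q.num := by
  rw [zsmul_eq_mul, Int.cast_natCast, mul_comm, Rat.mul_den_eq_num]

theorem Rat.intCast_not_surjective : ¬ Function.Surjective (Int.cast : ℤ → ℚ) := fun h => by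
  obtain ⟨n, hn⟩ := h (1 / 2)
  have := congrArg Rat.den hn
  norm_num [Rat.den_intCast] at this

/-- In the category of abelian groups, the canonical inclusion `ℤ ⟶ ℚ` is a pullback
stable essential monomorphism which is not an isomorphism. -/
theorem intToRat_stableEssentialMono_not_isIso :
    IsStableEssentialMono (AddCommGrpCat.ofHom (Int.castAddHom ℚ)) ∧
      ¬ IsIso (AddCommGrpCat.ofHom (Int.castAddHom ℚ)) := by
  have : Mono (AddCommGrpCat.ofHom (Int.castAddHom ℚ)) :=
    (AddCommGrpCat.mono_iff_injective _).2 Int.cast_injective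
  refine ⟨AddCommGrpCat.isStableEssentialMono_of_forall_exists_zsmul_mem_range _ fun q =>
    ⟨q.den, Int.natCast_ne_zero.2 q.den_nz, q.num, (Rat.den_zsmul_eq_num q).symm⟩, fun _ => ?_⟩
  exact Rat.intCast_not_surjective
    (ConcreteCategory.bijective_of_isIso (AddCommGrpCat.ofHom (Int.castAddHom ℚ))).2
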